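/- Let 𝔸 be a compact closed symmetric strict monoidal category and let D be a cornering of 𝔸. Then for every object A of 𝔸 there is an isomorphism A^• ≅ (A*)^∘ in the strict monoidal category H D of horizontal cells of D, where A* is the dual of A in 𝔸. -/

import Mathlib

/-- A single-object double category: a horizontal edge monoid `H`, a vertical
edge monoid `V`, and cells indexed by top/bottom boundaries in `H` and
left/right boundaries in `V`, with associative and unital horizontal and
vertical composition satisfying the interchange law, and with the horizontal
and vertical identity cells on the respective units coinciding. -/
structure SODC where
  H : Type
  V : Type
  hMul : H → H → H
  hOne : H
  vMul : V → V → V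
  vOne : V
  hMul_assoc : ∀ a b c : H, hMul (hMul a b) c = hMul a (hMul b c)
  hOne_mul : ∀ a : H, hMul hOne a = a
  hMul_one : ∀ a : H, hMul a hOne = a
  vMul_assoc : ∀ x y z : V, vMul (vMul x y) z = vMul x (vMul y z)
  vOne_mul : ∀ x : V, vMul vOne x = x
  vMul_one : ∀ x : V, vMul x vOne = x
  /-- Cells, indexed by top, bottom (in `H`) and left, right (in `V`) boundaries. -/
  Cell : H → H → V → V → Type
  /-- The horizontal identity cell on `x` (top and bottom boundary the unit). -/
  hid : ∀ x : V, Cell hOne hOne x x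
  /-- The vertical identity cell on `a` (left and right boundary the unit). -/
  vid : ∀ a : H, Cell a a vOne vOne
  /-- Horizontal composition of cells. -/
  hcomp : ∀ {t b t' b' : H} {x y z : V},
    Cell t b x y → Cell t' b' y z → Cell (hMul t t') (hMul b b') x z
  /-- Vertical composition of cells. -/
  vcomp : ∀ {t m b : H} {x y x' y' : V},
    Cell t m x y → Cell m b x' y' → Cell t b (vMul x x') (vMul y y')
  hcomp_assoc : ∀ {t b t' b' t'' b'' : H} {x y z w : V}
    (α : Cell t b x y) (β : Cell t' b' y z) (γ : Cell t'' b'' z w),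
    HEq (hcomp (hcomp α β) γ) (hcomp α (hcomp β γ))
  hid_hcomp : ∀ {t b : H} {x y : V} (α : Cell t b x y), HEq (hcomp (hid x) α) α
  hcomp_hid : ∀ {t b : H} {x y : V} (α : Cell t b x y), HEq (hcomp α (hid y)) α
  vcomp_assoc : ∀ {t m m' b : H} {x y x' y' x'' y'' : V}
    (α : Cell t m x y) (β : Cell m m' x' y') (γ : Cell m' b x'' y''),
    HEq (vcomp (vcomp α β) γ) (vcomp α (vcomp β γ))
  vid_vcomp : ∀ {t b : H} {x y : V} (α : Cell t b x y), HEq (vcomp (vid t) α) α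
  vcomp_vid : ∀ {t b : H} {x y : V} (α : Cell t b x y), HEq (vcomp α (vid b)) α
  /-- The horizontal and vertical identity cells on the units coincide. -/
  square_one : vid hOne = hid vOne
  /-- The interchange law `(α | γ) / (β | δ) = (α / β) | (γ / δ)`. -/
  interchange : ∀ {t m b t' m' b' : H} {x y z x' y' z' : V}
    (α : Cell t m x y) (γ : Cell t' m' y z) (β : Cell m b x' y') (δ : Cell m' b' y' z'),
    vcomp (hcomp α γ) (hcomp β δ) = hcomp (vcomp α β) (vcomp γ δ)
  hid_mul : ∀ x y : V, HEq (vcomp (hid x) (hid y)) (hid (vMul x y))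
  vid_mul : ∀ a b : H, HEq (hcomp (vid a) (vid b)) (vid (hMul a b))

namespace SODC

/-- Transport a cell along equalities of its boundaries. -/
def cast (D : SODC) {t t' b b' : D.H} {l l' r r' : D.V}
    (ht : t = t') (hb : b = b') (hl : l = l') (hr : r = r')
    (α : D.Cell t b l r) : D.Cell t' b' l' r' := by
  cases ht; cases hb; cases hl; cases hr; exact α

/-- `X` and `Y` are isomorphic objects of the strict monoidal category `H D` of
horizontal cells of `D`: there are cells (with trivial top and bottom boundary)
`f : X → Y` and `g : Y → X` whose horizontal composites are identities. -/
def HIso (D : SODC) (X Y : D.V) : Prop :=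
  ∃ (f : D.Cell D.hOne D.hOne X Y) (g : D.Cell D.hOne D.hOne Y X),
    HEq (D.hcomp f g) (D.hid X) ∧ HEq (D.hcomp g f) (D.hid Y)

/-- `Y` is a right dual of `X` in the strict monoidal category `H D` of
horizontal cells of `D`: there are a unit `η : I → X ⊗ Y` and a counit
`ε : Y ⊗ X → I` satisfying the two triangle (zig-zag) identities.  (In `H D`,
composition is horizontal composition of cells and the tensor of morphisms is
vertical composition of cells.) -/
def RightDual (D : SODC) (X Y : D.V) : Prop :=
  ∃ (η : D.Cell D.hOne D.hOne D.vOne (D.vMul X Y))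
    (ε : D.Cell D.hOne D.hOne (D.vMul Y X) D.vOne),
    HEq (D.hcomp (D.vcomp η (D.hid X))
          (D.cast rfl rfl (D.vMul_assoc X Y X).symm rfl (D.vcomp (D.hid X) ε)))
        (D.hid X) ∧
    HEq (D.hcomp (D.vcomp (D.hid Y) η)
          (D.cast rfl rfl (D.vMul_assoc Y X Y) rfl (D.vcomp ε (D.hid Y))))
        (D.hid Y)

end SODC

/-- A cornering structure on a single-object double category `D`.  The vertical
cells of `D` (cells with trivial left and right boundary, composed vertically
and tensored horizontally) form a strict monoidal category `𝔸 = V D`, which is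
required to be symmetric via the braiding cells `braid`; and every object
`a` of `𝔸` (element of `D.H`) has polarized objects `a^∘ = circ a` and
`a^• = bullet a` in `D.V` together with four corner cells satisfying the
yanking equations. -/
structure Cornering (D : SODC) where
  /-- The braiding `σ_{a,b} : a ⊗ b → b ⊗ a` of `𝔸 = V D`, as a vertical cell. -/
  braid : ∀ a b : D.H, D.Cell (D.hMul a b) (D.hMul b a) D.vOne D.vOne
  braid_natural : ∀ {a b c d : D.H}
    (f : D.Cell a b D.vOne D.vOne) (g : D.Cell c d D.vOne D.vOne),
    D.vcomp (D.hcomp f g) (braid b d) = D.vcomp (braid a c) (D.hcomp g f)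
  braid_symm : ∀ a b : D.H, HEq (D.vcomp (braid a b) (braid b a)) (D.vid (D.hMul a b))
  braid_hexagon : ∀ a b c : D.H,
    HEq (braid (D.hMul a b) c)
      (D.vcomp (D.hcomp (D.vid a) (braid b c))
        (D.cast (D.hMul_assoc a c b) (D.hMul_assoc c a b) rfl rfl
          (D.hcomp (braid a c) (D.vid b))))
  /-- The polarized object `a^∘`. -/
  circ : D.H → D.V
  /-- The polarized object `a^•`. -/
  bullet : D.H → D.V
  /-- The `∘`-send corner: top `a`, bottom `I`, left `I`, right `a^∘`. -/
  csend : ∀ a : D.H, D.Cell a D.hOne D.vOne (circ a)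
  /-- The `∘`-receive corner: top `I`, bottom `a`, left `a^∘`, right `I`. -/
  crecv : ∀ a : D.H, D.Cell D.hOne a (circ a) D.vOne
  /-- The `•`-send corner: top `a`, bottom `I`, left `a^•`, right `I`. -/
  bsend : ∀ a : D.H, D.Cell a D.hOne (bullet a) D.vOne
  /-- The `•`-receive corner: top `I`, bottom `a`, left `I`, right `a^•`. -/
  brecv : ∀ a : D.H, D.Cell D.hOne a D.vOne (bullet a)
  yank_circ_h : ∀ a : D.H, HEq (D.hcomp (csend a) (crecv a)) (D.vid a)
  yank_circ_v : ∀ a : D.H, HEq (D.vcomp (crecv a) (csend a)) (D.hid (circ a))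
  yank_bullet_h : ∀ a : D.H, HEq (D.hcomp (brecv a) (bsend a)) (D.vid a)
  yank_bullet_v : ∀ a : D.H, HEq (D.vcomp (brecv a) (bsend a)) (D.hid (bullet a))

/-- A compact closed structure on the symmetric strict monoidal category
`𝔸 = V D` of vertical cells of `D`: every object `a` has a chosen dual
`dual a` with unit `η_a : I → a ⊗ a*` and counit `ε_a : a* ⊗ a → I`
(as vertical cells) satisfying the triangle (snake) identities. -/
structure CompactStructure (D : SODC) where
  dual : D.H → D.H
  eta : ∀ a : D.H, D.Cell D.hOne (D.hMul a (dual a)) D.vOne D.vOne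
  eps : ∀ a : D.H, D.Cell (D.hMul (dual a) a) D.hOne D.vOne D.vOne
  snake₁ : ∀ a : D.H,
    HEq (D.vcomp (D.hcomp (eta a) (D.vid a))
          (D.cast (D.hMul_assoc a (dual a) a).symm rfl rfl rfl
            (D.hcomp (D.vid a) (eps a))))
        (D.vid a)
  snake₂ : ∀ a : D.H,
    HEq (D.vcomp (D.hcomp (D.vid (dual a)) (eta a))
          (D.cast (D.hMul_assoc (dual a) a (dual a)) rfl rfl rfl
            (D.hcomp (eps a) (D.vid (dual a)))))
        (D.vid (dual a))

/-! The isomorphism bends the unit and the counit of the duality along the corners: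
`f : a^• → (a*)^∘` is `η_a` on top of `•-send_a | ∘-send_{a*}`, and `g : (a*)^∘ → a^•` is
`∘-receive_{a*} | •-receive_a` on top of `ε_a`. In `f | g` the two `∘`-corners meet and yank to
the identity on `a*`; what is left is the zigzag of `η_a` and `ε_a` with a `•`-corner at each
end, which the snake identity straightens, so that the `•`-corners yank to the identity on
`a^•`. The composite `g | f` is symmetric, with the roles of `∘` and `•` exchanged. -/

-- With these laws `simp` normalises boundaries; it discharges the default arguments below.
attribute [simp] SODC.hOne_mul SODC.hMul_one SODC.hMul_assoc SODC.vOne_mul SODC.vMul_one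
  SODC.vMul_assoc

namespace SODC

variable (D : SODC)

theorem cast_heq {t t' b b' : D.H} {l l' r r' : D.V}
    (ht : t = t') (hb : b = b') (hl : l = l') (hr : r = r')
    (α : D.Cell t b l r) : HEq (D.cast ht hb hl hr α) α := by
  subst ht hb hl hr; rfl

variable {D}

theorem hcomp_congr {t₁ b₁ u₁ v₁ t₂ b₂ u₂ v₂ : D.H} {x₁ y₁ z₁ x₂ y₂ z₂ : D.V}
    {α₁ : D.Cell t₁ b₁ x₁ y₁} {β₁ : D.Cell u₁ v₁ y₁ z₁}
    {α₂ : D.Cell t₂ b₂ x₂ y₂} {β₂ : D.Cell u₂ v₂ y₂ z₂}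
    (hα : HEq α₁ α₂) (hβ : HEq β₁ β₂)
    (ht : t₁ = t₂ := by simp) (hb : b₁ = b₂ := by simp) (hu : u₁ = u₂ := by simp)
    (hv : v₁ = v₂ := by simp) (hx : x₁ = x₂ := by simp) (hy : y₁ = y₂ := by simp)
    (hz : z₁ = z₂ := by simp) :
    HEq (D.hcomp α₁ β₁) (D.hcomp α₂ β₂) := by
  subst ht hb hu hv hx hy hz
  rw [eq_of_heq hα, eq_of_heq hβ]

theorem vcomp_congr {t₁ m₁ b₁ t₂ m₂ b₂ : D.H} {x₁ y₁ x₁' y₁' x₂ y₂ x₂' y₂' : D.V}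
    {α₁ : D.Cell t₁ m₁ x₁ y₁} {β₁ : D.Cell m₁ b₁ x₁' y₁'}
    {α₂ : D.Cell t₂ m₂ x₂ y₂} {β₂ : D.Cell m₂ b₂ x₂' y₂'}
    (hα : HEq α₁ α₂) (hβ : HEq β₁ β₂)
    (ht : t₁ = t₂ := by simp) (hm : m₁ = m₂ := by simp) (hb : b₁ = b₂ := by simp)
    (hx : x₁ = x₂ := by simp) (hy : y₁ = y₂ := by simp) (hx' : x₁' = x₂' := by simp)
    (hy' : y₁' = y₂' := by simp) :
    HEq (D.vcomp α₁ β₁) (D.vcomp α₂ β₂) := by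
  subst ht hm hb hx hy hx' hy'
  rw [eq_of_heq hα, eq_of_heq hβ]

theorem vid_one_hcomp {t b : D.H} {y : D.V} (α : D.Cell t b D.vOne y) :
    HEq (D.hcomp (D.vid D.hOne) α) α := by
  rw [D.square_one]; exact D.hid_hcomp α

theorem hcomp_vid_one {t b : D.H} {x : D.V} (α : D.Cell t b x D.vOne) :
    HEq (D.hcomp α (D.vid D.hOne)) α := by
  rw [D.square_one]; exact D.hcomp_hid α

theorem vcomp_hcomp_vid_vid_hcomp {t b m c : D.H} {x z : D.V}
    (α : D.Cell t b x D.vOne) (δ : D.Cell m c D.vOne z) :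
    HEq (D.vcomp (D.hcomp α (D.vid m)) (D.hcomp (D.vid b) δ)) (D.hcomp α δ) := by
  rw [D.interchange]
  exact hcomp_congr (D.vcomp_vid α) (D.vid_vcomp δ)

theorem vcomp_vid_hcomp_hcomp_vid {t b m c : D.H} {x z : D.V}
    (α : D.Cell t b x D.vOne) (δ : D.Cell m c D.vOne z) :
    HEq (D.vcomp (D.hcomp (D.vid t) δ) (D.hcomp α (D.vid c))) (D.hcomp α δ) := by
  rw [D.interchange]
  exact hcomp_congr (D.vid_vcomp α) (D.vcomp_vid δ)

theorem hcomp_hcomp_heq_of_yank {q s s' r r' t b t' b' : D.H} {x w z : D.V}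
    {σ : D.Cell s s' D.vOne w} {ρ : D.Cell r r' w D.vOne}
    (hyank : HEq (D.hcomp σ ρ) (D.vid q))
    (α : D.Cell t b x D.vOne) (β : D.Cell t' b' D.vOne z)
    (ht : D.hMul s r = q := by simp) (hb : D.hMul s' r' = q := by simp) :
    HEq (D.hcomp (D.hcomp α σ) (D.hcomp ρ β)) (D.hcomp α (D.hcomp (D.vid q) β)) := by
  exact (D.hcomp_assoc _ _ _).trans <| hcomp_congr HEq.rfl
    ((D.hcomp_assoc _ _ _).symm.trans (hcomp_congr hyank HEq.rfl ht hb))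
    (hu := by simp [← ht]) (hv := by simp [← hb])

theorem hcomp_heq_vcomp_vcomp_hcomp {t m b t' m' b' b₀ t₀ : D.H} {x y z : D.V}
    {φ : D.Cell t m D.vOne D.vOne} {B : D.Cell m b x y} {Γ : D.Cell t' m' y z}
    {ψ : D.Cell m' b' D.vOne D.vOne} {f : D.Cell t b₀ x y} {g : D.Cell t₀ b' y z}
    {M : D.Cell (D.hMul m t₀) (D.hMul b₀ m') x z}
    (hf : HEq f (D.vcomp φ B)) (hg : HEq g (D.vcomp Γ ψ)) (hM : HEq M (D.hcomp B Γ))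
    (hb : b₀ = b := by simp) (ht : t₀ = t' := by simp) :
    HEq (D.hcomp f g)
      (D.vcomp (D.vcomp (D.hcomp φ (D.vid t₀)) M) (D.hcomp (D.vid b₀) ψ)) := by
  subst b₀ t₀
  obtain rfl := eq_of_heq hM
  have hfg : HEq (D.hcomp f g)
      (D.hcomp (D.vcomp φ (D.vcomp B (D.vid b))) (D.vcomp (D.vid t') (D.vcomp Γ ψ))) :=
    hcomp_congr (hf.trans (vcomp_congr HEq.rfl (D.vcomp_vid B).symm))
      (hg.trans (D.vid_vcomp _).symm)
  rw [← D.interchange, ← D.interchange] at hfg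
  exact hfg.trans (D.vcomp_assoc _ _ _).symm

theorem hcomp_heq_vcomp_vcomp_hcomp' {t m b t' m' b' b₀ t₀ : D.H} {x y z : D.V}
    {Γ : D.Cell t m x y} {ψ : D.Cell m b D.vOne D.vOne} {φ : D.Cell t' m' D.vOne D.vOne}
    {B : D.Cell m' b' y z} {g : D.Cell t₀ b x y} {f : D.Cell t' b₀ y z}
    {M : D.Cell (D.hMul t₀ m') (D.hMul m b₀) x z}
    (hg : HEq g (D.vcomp Γ ψ)) (hf : HEq f (D.vcomp φ B)) (hM : HEq M (D.hcomp Γ B))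
    (ht : t₀ = t := by simp) (hb : b₀ = b' := by simp) :
    HEq (D.hcomp g f)
      (D.vcomp (D.vcomp (D.hcomp (D.vid t₀) φ) M) (D.hcomp ψ (D.vid b₀))) := by
  subst b₀ t₀
  obtain rfl := eq_of_heq hM
  have hgf : HEq (D.hcomp g f)
      (D.hcomp (D.vcomp (D.vid t) (D.vcomp Γ ψ)) (D.vcomp φ (D.vcomp B (D.vid b')))) :=
    hcomp_congr (hg.trans (D.vid_vcomp _).symm)
      (hf.trans (vcomp_congr HEq.rfl (D.vcomp_vid B).symm))
  rw [← D.interchange, ← D.interchange] at hgf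
  exact hgf.trans (D.vcomp_assoc _ _ _).symm

-- The middle row `M` is fixed only up to `HEq`, so that its boundaries can be bracketed to
-- match the rows above and below it.
theorem zigzag_heq_of_snake₁ {p q u v : D.H} {x y : D.V}
    {φ : D.Cell D.hOne (D.hMul p q) D.vOne D.vOne} {ψ : D.Cell (D.hMul q p) D.hOne D.vOne D.vOne}
    (hsnake : HEq (D.vcomp (D.hcomp φ (D.vid p))
      (D.cast (D.hMul_assoc p q p).symm rfl rfl rfl (D.hcomp (D.vid p) ψ))) (D.vid p))
    {α : D.Cell p u x D.vOne} {β : D.Cell v p D.vOne y}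
    {M : D.Cell (D.hMul (D.hMul p q) v) (D.hMul u (D.hMul q p)) x y}
    (hM : HEq M (D.hcomp α (D.hcomp (D.vid q) β))) :
    HEq (D.vcomp (D.vcomp (D.hcomp φ (D.vid v)) M) (D.hcomp (D.vid u) ψ)) (D.vcomp β α) := by
  set ψ' := D.cast (D.hMul_assoc p q p).symm rfl rfl rfl (D.hcomp (D.vid p) ψ)
  set T := D.hcomp (D.vid (D.hMul p q)) β
  set B := D.cast (D.hMul_assoc p q p).symm rfl rfl rfl (D.hcomp α (D.vid (D.hMul q p)))
  have hMTB : HEq M (D.vcomp T B) :=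
    hM.trans <| (D.vcomp_vid_hcomp_hcomp_vid α _).symm.trans <|
      vcomp_congr ((D.hcomp_assoc _ _ _).symm.trans (hcomp_congr (D.vid_mul p q) HEq.rfl))
        (D.cast_heq _ _ _ _ _).symm
  have hupper : HEq (D.vcomp (D.hcomp φ (D.vid v)) T)
      (D.vcomp (D.hcomp (D.vid D.hOne) β) (D.hcomp φ (D.vid p))) :=
    (D.vcomp_hcomp_vid_vid_hcomp φ β).trans (D.vcomp_vid_hcomp_hcomp_vid φ β).symm
  have hlower : HEq (D.vcomp B (D.hcomp (D.vid u) ψ))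
      (D.vcomp ψ' (D.hcomp α (D.vid D.hOne))) :=
    (vcomp_congr (D.cast_heq _ _ _ _ _) HEq.rfl).trans <|
      (D.vcomp_hcomp_vid_vid_hcomp α ψ).trans <|
      (D.vcomp_vid_hcomp_hcomp_vid α ψ).symm.trans
      (vcomp_congr (D.cast_heq _ _ _ _ _).symm HEq.rfl)
  have hzig : HEq (D.vcomp (D.hcomp φ (D.vid p)) (D.vcomp ψ' (D.hcomp α (D.vid D.hOne)))) α :=
    (D.vcomp_assoc _ _ _).symm.trans <|
      (vcomp_congr hsnake (D.hcomp_vid_one α)).trans (D.vid_vcomp α)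
  exact (vcomp_congr (vcomp_congr HEq.rfl hMTB) HEq.rfl).trans <|
    (vcomp_congr (D.vcomp_assoc _ T B).symm HEq.rfl).trans <|
    (D.vcomp_assoc _ B _).trans <| (vcomp_congr hupper hlower).trans <|
    (D.vcomp_assoc _ _ _).trans (vcomp_congr (D.vid_one_hcomp β) hzig)

theorem zigzag_heq_of_snake₂ {p q u v : D.H} {x z : D.V}
    {φ : D.Cell D.hOne (D.hMul p q) D.vOne D.vOne} {ψ : D.Cell (D.hMul q p) D.hOne D.vOne D.vOne}
    (hsnake : HEq (D.vcomp (D.hcomp (D.vid q) φ)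
      (D.cast (D.hMul_assoc q p q) rfl rfl rfl (D.hcomp ψ (D.vid q)))) (D.vid q))
    {γ : D.Cell v q x D.vOne} {δ : D.Cell q u D.vOne z}
    {M : D.Cell (D.hMul v (D.hMul p q)) (D.hMul (D.hMul q p) u) x z}
    (hM : HEq M (D.hcomp γ (D.hcomp (D.vid p) δ))) :
    HEq (D.vcomp (D.vcomp (D.hcomp (D.vid v) φ) M) (D.hcomp ψ (D.vid u))) (D.vcomp γ δ) := by
  set ψ' := D.cast (D.hMul_assoc q p q) rfl rfl rfl (D.hcomp ψ (D.vid q))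
  set T := D.hcomp γ (D.vid (D.hMul p q))
  set B := D.cast (D.hMul_assoc q p q) rfl rfl rfl (D.hcomp (D.vid (D.hMul q p)) δ)
  have hMTB : HEq M (D.vcomp T B) :=
    hM.trans <| (D.vcomp_hcomp_vid_vid_hcomp γ _).symm.trans <|
      vcomp_congr HEq.rfl <| (D.hcomp_assoc _ _ _).symm.trans <|
        (hcomp_congr (D.vid_mul q p) HEq.rfl).trans (D.cast_heq _ _ _ _ _).symm
  have hupper : HEq (D.vcomp (D.hcomp (D.vid v) φ) T)
      (D.vcomp (D.hcomp γ (D.vid D.hOne)) (D.hcomp (D.vid q) φ)) :=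
    (D.vcomp_vid_hcomp_hcomp_vid γ φ).trans (D.vcomp_hcomp_vid_vid_hcomp γ φ).symm
  have hlower : HEq (D.vcomp B (D.hcomp ψ (D.vid u)))
      (D.vcomp ψ' (D.hcomp (D.vid D.hOne) δ)) :=
    (vcomp_congr (D.cast_heq _ _ _ _ _) HEq.rfl).trans <|
      (D.vcomp_vid_hcomp_hcomp_vid ψ δ).trans <|
      (D.vcomp_hcomp_vid_vid_hcomp ψ δ).symm.trans
      (vcomp_congr (D.cast_heq _ _ _ _ _).symm HEq.rfl)
  have hzig : HEq (D.vcomp (D.hcomp (D.vid q) φ) (D.vcomp ψ' (D.hcomp (D.vid D.hOne) δ))) δ :=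
    (D.vcomp_assoc _ _ _).symm.trans <|
      (vcomp_congr hsnake (D.vid_one_hcomp δ)).trans (D.vid_vcomp δ)
  exact (vcomp_congr (vcomp_congr HEq.rfl hMTB) HEq.rfl).trans <|
    (vcomp_congr (D.vcomp_assoc _ T B).symm HEq.rfl).trans <|
    (D.vcomp_assoc _ B _).trans <| (vcomp_congr hupper hlower).trans <|
    (D.vcomp_assoc _ _ _).trans (vcomp_congr (D.hcomp_vid_one γ) hzig)

end SODC

namespace Cornering

variable {D : SODC} (C : Cornering D)

def bulletToCirc {a d : D.H} (φ : D.Cell D.hOne (D.hMul a d) D.vOne D.vOne) :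
    D.Cell D.hOne D.hOne (C.bullet a) (C.circ d) :=
  D.cast rfl (D.hOne_mul D.hOne) (D.vOne_mul _) (D.vOne_mul _)
    (D.vcomp φ (D.hcomp (C.bsend a) (C.csend d)))

def circToBullet {a d : D.H} (ψ : D.Cell (D.hMul d a) D.hOne D.vOne D.vOne) :
    D.Cell D.hOne D.hOne (C.circ d) (C.bullet a) :=
  D.cast (D.hOne_mul D.hOne) rfl (D.vMul_one _) (D.vMul_one _)
    (D.vcomp (D.hcomp (C.crecv d) (C.brecv a)) ψ)

variable {C}

theorem bulletToCirc_hcomp_circToBullet {a d : D.H}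
    {φ : D.Cell D.hOne (D.hMul a d) D.vOne D.vOne} {ψ : D.Cell (D.hMul d a) D.hOne D.vOne D.vOne}
    (hsnake : HEq (D.vcomp (D.hcomp φ (D.vid a))
      (D.cast (D.hMul_assoc a d a).symm rfl rfl rfl (D.hcomp (D.vid a) ψ))) (D.vid a)) :
    HEq (D.hcomp (C.bulletToCirc φ) (C.circToBullet ψ)) (D.hid (C.bullet a)) := by
  have hM := D.cast_heq
    (show D.hMul a (D.hMul d D.hOne) = D.hMul (D.hMul a d) D.hOne by simp) rfl rfl rfl
    (D.hcomp (C.bsend a) (D.hcomp (D.vid d) (C.brecv a)))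
  exact (SODC.hcomp_heq_vcomp_vcomp_hcomp (D.cast_heq _ _ _ _ _) (D.cast_heq _ _ _ _ _)
      (hM.trans (SODC.hcomp_hcomp_heq_of_yank (C.yank_circ_h d) _ _).symm)).trans <|
    (SODC.zigzag_heq_of_snake₁ hsnake hM).trans (C.yank_bullet_v a)

theorem circToBullet_hcomp_bulletToCirc {a d : D.H}
    {φ : D.Cell D.hOne (D.hMul a d) D.vOne D.vOne} {ψ : D.Cell (D.hMul d a) D.hOne D.vOne D.vOne}
    (hsnake : HEq (D.vcomp (D.hcomp (D.vid d) φ)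
      (D.cast (D.hMul_assoc d a d) rfl rfl rfl (D.hcomp ψ (D.vid d)))) (D.vid d)) :
    HEq (D.hcomp (C.circToBullet ψ) (C.bulletToCirc φ)) (D.hid (C.circ d)) := by
  have hM := D.cast_heq rfl
    (show D.hMul d (D.hMul a D.hOne) = D.hMul (D.hMul d a) D.hOne by simp) rfl rfl
    (D.hcomp (C.crecv d) (D.hcomp (D.vid a) (C.csend d)))
  exact (SODC.hcomp_heq_vcomp_vcomp_hcomp' (D.cast_heq _ _ _ _ _) (D.cast_heq _ _ _ _ _)
      (hM.trans (SODC.hcomp_hcomp_heq_of_yank (C.yank_bullet_h a) _ _).symm)).trans <|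
    (SODC.zigzag_heq_of_snake₂ hsnake hM).trans (C.yank_circ_v d)

end Cornering

/-- Let `𝔸` be a compact closed symmetric strict monoidal
category and `D` a cornering of `𝔸`.  Then for every object `A` of `𝔸` there is
an isomorphism `A^• ≅ (A*)^∘` in the strict monoidal category `H D` of
horizontal cells of `D`, where `A*` is the dual of `A` in `𝔸`. -/
theorem bullet_iso_circ_dual (D : SODC) (C : Cornering D) (K : CompactStructure D) :
    ∀ a : D.H, D.HIso (C.bullet a) (C.circ (K.dual a)) := fun a =>
  ⟨C.bulletToCirc (K.eta a), C.circToBullet (K.eps a),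
    Cornering.bulletToCirc_hcomp_circToBullet (K.snake₁ a),
    Cornering.circToBullet_hcomp_bulletToCirc (K.snake₂ a)⟩
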